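/- Let S be a real m×k matrix with SSᵀ = Q·diag(Λ,0)·Qᵀ where Q is orthogonal and Λ is an r×r diagonal matrix with strictly positive entries (r = rank(S)). Then for any V ∈ ℝ^{m×n} whose columns lie in the column space of S, tr(Sᵀ V Vᵀ S) ≥ ‖V‖_F² / tr(Λ⁻¹). -/
import Mathlib


/-- Lower bound: if `SSᵀ = Q diag(μ) Qᵀ` with `Q` orthogonal and nonnegative
eigenvalues `μ` (the positive block being `Λ`, so that `tr(Λ⁻¹) = ∑ i, (μ i)⁻¹`
since `(0 : ℝ)⁻¹ = 0`), then for every `V` whose columns lie in the column space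
of `S`, `tr(Sᵀ V Vᵀ S) ≥ ‖V‖_F² / tr(Λ⁻¹)`. -/
theorem stmt11 (m k n : ℕ) (S : Matrix (Fin m) (Fin k) ℝ)
    (Q : Matrix (Fin m) (Fin m) ℝ) (hQ : Q.transpose * Q = 1)
    (μ : Fin m → ℝ) (hμ : ∀ i, 0 ≤ μ i)
    (hspec : S * S.transpose = Q * Matrix.diagonal μ * Q.transpose)
    (V : Matrix (Fin m) (Fin n) ℝ)
    (hcol : ∀ j : Fin n, ∃ c : Fin k → ℝ, (fun i => V i j) = S.mulVec c) :
    Matrix.trace (V.transpose * V) / (∑ i, (μ i)⁻¹) ≤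
      Matrix.trace (S.transpose * V * V.transpose * S) := by
  have hQQ : Q * Q.transpose = 1 := mul_eq_one_comm.mp hQ
  set W : Matrix (Fin m) (Fin n) ℝ := Q.transpose * V with hW
  set a : Fin m → ℝ := fun i => ∑ j, (W i j) ^ 2 with ha
  have hA : (Q.transpose * S) * (Q.transpose * S).transpose = Matrix.diagonal μ := by
    rw [Matrix.transpose_mul, Matrix.transpose_transpose]
    calc Q.transpose * S * (S.transpose * Q)
        = Q.transpose * (S * S.transpose) * Q := by
          simp only [Matrix.mul_assoc]
      _ = (Q.transpose * Q) * Matrix.diagonal μ * (Q.transpose * Q) := by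
          rw [hspec]; simp only [Matrix.mul_assoc]
      _ = Matrix.diagonal μ := by rw [hQ]; simp
  have hrow0 : ∀ i, μ i = 0 → ∀ l, (Q.transpose * S) i l = 0 := by
    intro i hi l
    have h := congrArg (fun M => M i i) hA
    simp only [Matrix.mul_apply, Matrix.transpose_apply, Matrix.diagonal_apply_eq] at h
    rw [hi] at h
    have h' : ∀ x ∈ Finset.univ, (0:ℝ) ≤ (Q.transpose * S) i x * (Q.transpose * S) i x :=
      fun x _ => mul_self_nonneg _
    have := (Finset.sum_eq_zero_iff_of_nonneg h').mp h l (Finset.mem_univ l)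
    nlinarith [this]
  have hW0 : ∀ i, μ i = 0 → ∀ j, W i j = 0 := by
    intro i hi j
    obtain ⟨c, hc⟩ := hcol j
    have hVj : ∀ l, V l j = S.mulVec c l := fun l => congrFun hc l
    have : W i j = ∑ p, (Q.transpose * S) i p * c p := by
      simp only [hW, Matrix.mul_apply, hVj, Matrix.mulVec, dotProduct,
        Matrix.transpose_apply, Finset.mul_sum, Finset.sum_mul]
      rw [Finset.sum_comm]
      exact Finset.sum_congr rfl fun p _ => Finset.sum_congr rfl fun x _ => by ring
    rw [this]
    exact Finset.sum_eq_zero fun p _ => by rw [hrow0 i hi p]; ring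
  -- trace identities
  have h1 : Matrix.trace (V.transpose * V) = ∑ i, a i := by
    have hWW : W.transpose * W = V.transpose * V := by
      rw [hW, Matrix.transpose_mul, Matrix.transpose_transpose, Matrix.mul_assoc,
        ← Matrix.mul_assoc Q, hQQ, Matrix.one_mul]
    rw [← hWW]
    simp only [Matrix.trace, Matrix.diag, Matrix.mul_apply, Matrix.transpose_apply, ha]
    rw [Finset.sum_comm]
    exact Finset.sum_congr rfl fun i _ => Finset.sum_congr rfl fun j _ => (sq (W i j)).symm ▸ by ring
  have h2 : Matrix.trace (S.transpose * V * V.transpose * S) = ∑ i, a i * μ i := by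
    have e1 : S.transpose * V * V.transpose * S = (S.transpose * V) * (V.transpose * S) := by
      simp only [Matrix.mul_assoc]
    rw [e1, Matrix.trace_mul_comm]
    have e2 : (V.transpose * S) * (S.transpose * V) = V.transpose * (Q * Matrix.diagonal μ * Q.transpose) * V := by
      rw [← hspec]; simp only [Matrix.mul_assoc]
    rw [e2]
    have e3 : V.transpose * (Q * Matrix.diagonal μ * Q.transpose) * V
        = W.transpose * (Matrix.diagonal μ * W) := by
      rw [hW, Matrix.transpose_mul, Matrix.transpose_transpose]
      simp only [Matrix.mul_assoc]
    rw [e3, Matrix.trace_mul_comm]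
    have e4 : (Matrix.diagonal μ * W) * W.transpose = Matrix.diagonal μ * (W * W.transpose) := by
      rw [Matrix.mul_assoc]
    rw [e4]
    simp only [Matrix.trace, Matrix.diag, Matrix.diagonal_mul, Matrix.mul_apply,
      Matrix.transpose_apply, ha]
    refine Finset.sum_congr rfl fun i _ => ?_
    rw [Finset.sum_eq_single i]
    · rw [Matrix.diagonal_apply_eq, Finset.mul_sum, Finset.sum_mul]
      exact Finset.sum_congr rfl fun j _ => by ring
    · intro b _ hb
      rw [Matrix.diagonal_apply_ne _ (Ne.symm hb), zero_mul]
    · intro h; exact absurd (Finset.mem_univ i) h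
  rw [h1, h2]
  set T : ℝ := ∑ i, (μ i)⁻¹ with hT
  have hTnn : 0 ≤ T := Finset.sum_nonneg fun i _ => inv_nonneg.mpr (hμ i)
  have hann : ∀ i, 0 ≤ a i := fun i => Finset.sum_nonneg fun j _ => sq_nonneg _
  have hRnn : 0 ≤ ∑ i, a i * μ i :=
    Finset.sum_nonneg fun i _ => mul_nonneg (hann i) (hμ i)
  rcases eq_or_lt_of_le hTnn with hT0 | hTpos
  · rw [← hT0, div_zero]; exact hRnn
  · rw [div_le_iff₀ hTpos]
    rw [Finset.sum_mul]
    refine Finset.sum_le_sum fun i _ => ?_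
    rcases eq_or_lt_of_le (hμ i) with hμ0 | hμpos
    · have : a i = 0 := by
        simp only [ha]
        exact Finset.sum_eq_zero fun j _ => by rw [hW0 i hμ0.symm j]; ring
      rw [this]
      positivity
    · have hinv : (μ i)⁻¹ ≤ T := by
        rw [hT]
        exact Finset.single_le_sum (fun l (_ : l ∈ Finset.univ) => inv_nonneg.mpr (hμ l)) (Finset.mem_univ i)
      calc a i = a i * μ i * (μ i)⁻¹ := by field_simp
        _ ≤ a i * μ i * T := by
            exact mul_le_mul_of_nonneg_left hinv (mul_nonneg (hann i) (hμ i))
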